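/- In a Richman bidding game with charging, the two bounded-horizon threshold functions are complementary: for every vertex v and every horizon t ∈ ℕ, f₁(v,t) + f₂(v,t) = 1. -/

import Mathlib

noncomputable section

def clamp (x : ℝ) : ℝ := min 1 (max 0 x)

variable {V : Type*} [DecidableEq V]

def fmax (S : V → Finset V) (hS : ∀ v, (S v).Nonempty) (f : V → ℝ) (v : V) : ℝ :=
  (S v).sup' (hS v) f

def fmin (S : V → Finset V) (hS : ∀ v, (S v).Nonempty) (f : V → ℝ) (v : V) : ℝ :=
  (S v).inf' (hS v) f

/-- Richman update operator for Player 1. -/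
def Av1 (S : V → Finset V) (hS : ∀ v, (S v).Nonempty) (R₁ R₂ : V → ℝ)
    (f : V → ℝ) (v : V) : ℝ :=
  clamp (((fmax S hS f v + fmin S hS f v) / 2) * (1 + R₁ v + R₂ v) - R₁ v)

/-- Richman update operator for Player 2. -/
def Av2 (S : V → Finset V) (hS : ∀ v, (S v).Nonempty) (R₁ R₂ : V → ℝ)
    (f : V → ℝ) (v : V) : ℝ :=
  clamp (((fmax S hS f v + fmin S hS f v) / 2) * (1 + R₁ v + R₂ v) - R₂ v)

/-- Bounded-horizon reachability thresholds of Player 1 (Richman bidding). -/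
def f1 (T : Finset V) (S : V → Finset V) (hS : ∀ v, (S v).Nonempty)
    (R₁ R₂ : V → ℝ) : ℕ → V → ℝ
  | 0 => fun v => if v ∈ T then 0 else 1
  | (t+1) => fun v => if v ∈ T then 0 else Av1 S hS R₁ R₂ (f1 T S hS R₁ R₂ t) v

/-- Bounded-horizon safety thresholds of Player 2 (Richman bidding). -/
def f2 (T : Finset V) (S : V → Finset V) (hS : ∀ v, (S v).Nonempty)
    (R₁ R₂ : V → ℝ) : ℕ → V → ℝ
  | 0 => fun v => if v ∈ T then 1 else 0
  | (t+1) => fun v => if v ∈ T then 1 else Av2 S hS R₁ R₂ (f2 T S hS R₁ R₂ t) v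

end

lemma clamp_add_clamp_one_sub (x : ℝ) : clamp x + clamp (1 - x) = 1 := by
  unfold clamp
  rcases le_total x 0 with h | h <;> rcases le_total 1 x with h' | h' <;>
    simp [min_def, max_def] <;> split_ifs <;> linarith

lemma sup'_one_sub {V : Type*} (s : Finset V) (h : s.Nonempty) (f : V → ℝ) :
    s.sup' h (fun u => 1 - f u) = 1 - s.inf' h f := by
  apply le_antisymm
  · apply Finset.sup'_le
    intro u hu
    have := Finset.inf'_le f hu
    linarith
  · obtain ⟨u, hu, hval⟩ := Finset.exists_mem_eq_inf' h f
    have := Finset.le_sup' (fun u => 1 - f u) hu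
    rw [hval]; exact this

lemma inf'_one_sub {V : Type*} (s : Finset V) (h : s.Nonempty) (f : V → ℝ) :
    s.inf' h (fun u => 1 - f u) = 1 - s.sup' h f := by
  apply le_antisymm
  · obtain ⟨u, hu, hval⟩ := Finset.exists_mem_eq_sup' h f
    have := Finset.inf'_le (fun u => 1 - f u) hu
    rw [hval]; exact this
  · apply Finset.le_inf'
    intro u hu
    have := Finset.le_sup' f hu
    linarith

theorem richman_bounded_horizon_complementary {V : Type*} [DecidableEq V]
    (T : Finset V) (S : V → Finset V) (hS : ∀ v, (S v).Nonempty)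
    (R₁ R₂ : V → ℝ) (hR₁ : ∀ v, 0 ≤ R₁ v) (hR₂ : ∀ v, 0 ≤ R₂ v) :
    ∀ (v : V) (t : ℕ),
      f1 T S hS R₁ R₂ t v + f2 T S hS R₁ R₂ t v = 1 := by
  intro v t
  induction t generalizing v with
  | zero => by_cases h : v ∈ T <;> simp [f1, f2, h]
  | succ t ih =>
    by_cases h : v ∈ T
    · simp [f1, f2, h]
    · simp only [f1, f2, if_neg h]
      have hf2 : f2 T S hS R₁ R₂ t = fun u => 1 - f1 T S hS R₁ R₂ t u := by
        funext u; have := ih u; linarith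
      rw [hf2]
      unfold Av2 Av1 fmax fmin
      rw [sup'_one_sub, inf'_one_sub]
      set M := (S v).sup' (hS v) (f1 T S hS R₁ R₂ t)
      set m := (S v).inf' (hS v) (f1 T S hS R₁ R₂ t)
      have : (1 - m + (1 - M)) / 2 * (1 + R₁ v + R₂ v) - R₂ v
          = 1 - ((M + m) / 2 * (1 + R₁ v + R₂ v) - R₁ v) := by ring
      rw [this]
      exact clamp_add_clamp_one_sub _
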